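/- (Theorem 2) In the setup below, assume f is concave on ℝ₊ⁿ and that there exists a function f* : ℝⁿ → ℝ that is monotone, subadditive and concave on all of ℝⁿ and satisfies f*(x) = f(x) for all x ∈ ℝ₊ⁿ. Then for every S ⊆ {1,…,n} with |S| ≤ k: u(S) ≥ (1/2)·(1−ε)^{k−1}·(1−Δ/ε)·v(S) and u(S) ≤ 2·(1 + a·k/(ε−Δ)) / ((1−ε)^k·(1−Δ/ε)) · v(S). -/

import Mathlib

/-!
All vectors that occur are nonnegative, so `f` may be replaced by its extension `F`, which is
monotone, subadditive and concave on all of `ℝⁿ`, hence continuous. Let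
`Q = ∑_{i ∈ S} ℙ(X_i > τ_i) H_i`.

Splitting off the coordinates above their thresholds and using subadditivity gives, pointwise,
`f(X_S) ≤ f(X̂_S) + ∑ 1{X_i > τ_i} f(X_i e_i)` and `f(X̂_S) ≤ f(X_S) + ∑ 1{X_i > τ_i} H_i`.
Concavity on all of `ℝⁿ` together with subadditivity gives `F(x + a d) ≤ F(x) + a F(d)` for
`a ≥ 0`; with `X̂ ≤ X̃ + a τ` and `(1 - ε) X̃ ≤ Y` this yields
`f(X̂_S) ≤ f(Y_S) / (1 - ε) + a f(τ_S)`, and `(ε - Δ) f(τ_S) ≤ Q` by subadditivity again.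
Taking expectations, `v(S) ≤ u(S) + Q` and `u(S) ≤ v(S) / (1 - ε) + a f(τ_S) + Q`.

It remains to bound `Q` by `u(S)` and `v(S)`. The events "`i` is the first index of `S` with
`X_i > τ_i`" are disjoint, and by independence the `i`-th one carries at least a fraction
`(1 - ε)^(k-1)` of the mass of `{X_i > τ_i}`. On it `f(X_S) ≥ f(X_i e_i)` and
`f(Y_S) ≥ (1 - ε) f(X̃_S) ≥ (1 - ε) H_i`, whence `(1 - ε)^(k-1) Q ≤ u(S)` and
`(1 - ε)^k Q ≤ v(S)`.
-/

open MeasureTheory ProbabilityTheory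

/-- For a subset `S` of coordinates, `mask S x` is the vector agreeing with `x` on `S`
and equal to `0` outside `S`. -/
def mask {n : ℕ} (S : Finset (Fin n)) (x : Fin n → ℝ) : Fin n → ℝ :=
  fun i => if i ∈ S then x i else 0

open Set

section Subadditive

lemma apply_nonneg_of_subadditive {M : Type*} [AddMonoid M] [Preorder M] {F : M → ℝ}
    (hF_mono : Monotone F) (hF_sub : ∀ x y, F (x + y) ≤ F x + F y) {x : M} (hx : 0 ≤ x) :
    0 ≤ F x :=
  (by simpa using hF_sub 0 0 : 0 ≤ F 0).trans (hF_mono hx)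

lemma apply_add_sum_le_of_subadditive {M ι : Type*} [AddCommMonoid M] {F : M → ℝ}
    (hF_sub : ∀ x y, F (x + y) ≤ F x + F y) (x : M) (s : Finset ι) (y : ι → M) :
    F (x + ∑ i ∈ s, y i) ≤ F x + ∑ i ∈ s, F (y i) := by
  rcases s.eq_empty_or_nonempty with rfl | hs
  · simp
  · exact (hF_sub _ _).trans
      (add_le_add_right (Finset.le_sum_nonempty_of_subadditive F hF_sub hs y) _)

variable {E : Type*} [AddCommGroup E] [Module ℝ E] {F : E → ℝ}

lemma ConcaveOn.mul_le_apply_smul (hF : ConcaveOn ℝ univ F) (hF0 : 0 ≤ F 0) {t : ℝ}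
    (ht0 : 0 ≤ t) (ht1 : t ≤ 1) (x : E) : t * F x ≤ F (t • x) := by
  have h := hF.2 (mem_univ x) (mem_univ 0) ht0 (sub_nonneg.2 ht1) (add_sub_cancel t 1)
  simp only [smul_zero, add_zero, smul_eq_mul] at h
  nlinarith

lemma ConcaveOn.mul_apply_le_of_smul_le [PartialOrder E] (hF : ConcaveOn ℝ univ F)
    (hF_mono : Monotone F) (hF0 : 0 ≤ F 0) {t : ℝ} (ht0 : 0 ≤ t) (ht1 : t ≤ 1) {x y : E}
    (hxy : t • x ≤ y) : t * F x ≤ F y :=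
  (hF.mul_le_apply_smul hF0 ht0 ht1 x).trans (hF_mono hxy)

lemma ConcaveOn.apply_add_smul_le (hF : ConcaveOn ℝ univ F)
    (hF_sub : ∀ x y, F (x + y) ≤ F x + F y) {a : ℝ} (ha : 0 ≤ a) (x d : E) :
    F (x + a • d) ≤ F x + a * F d := by
  -- `x` is the convex combination of `x + a • d` and `x - d` with weights `1 : a`, and
  -- `F x ≤ F (x - d) + F d`.
  have hpos : 0 < 1 + a := by linarith
  have hcomb : (1 / (1 + a)) • (x + a • d) + (a / (1 + a)) • (x - d) = x := by
    match_scalars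
    · field_simp
    · field_simp; ring
  have h := hF.2 (mem_univ (x + a • d)) (mem_univ (x - d))
    (show 0 ≤ 1 / (1 + a) by positivity) (show 0 ≤ a / (1 + a) by positivity) (by field_simp)
  rw [hcomb, smul_eq_mul, smul_eq_mul, div_mul_eq_mul_div, div_mul_eq_mul_div, ← add_div,
    div_le_iff₀ hpos] at h
  have hsub := hF_sub (x - d) d
  rw [sub_add_cancel] at hsub
  nlinarith

end Subadditive

section Mask

variable {n : ℕ} {S : Finset (Fin n)} {x y : Fin n → ℝ} {F : (Fin n → ℝ) → ℝ}

lemma mask_apply (S : Finset (Fin n)) (x : Fin n → ℝ) (i : Fin n) :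
    mask S x i = if i ∈ S then x i else 0 := rfl

lemma mask_nonneg (hx : ∀ i ∈ S, 0 ≤ x i) : 0 ≤ mask S x := fun i => by
  by_cases hi : i ∈ S <;> simp [mask_apply, hi, hx]

lemma mask_le_mask (h : ∀ i ∈ S, x i ≤ y i) : mask S x ≤ mask S y := fun i => by
  by_cases hi : i ∈ S <;> simp [mask_apply, hi, h]

lemma smul_mask_le_mask {t : ℝ} (h : ∀ i ∈ S, t * x i ≤ y i) : t • mask S x ≤ mask S y :=
  fun i => by by_cases hi : i ∈ S <;> simp [mask_apply, hi, h]

lemma single_le_mask {i : Fin n} (hi : i ∈ S) (hx : ∀ j ∈ S, 0 ≤ x j) :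
    Pi.single i (x i) ≤ mask S x := fun j => by
  rcases eq_or_ne j i with rfl | hj
  · simp [mask_apply, hi]
  · by_cases hjS : j ∈ S <;> simp [mask_apply, hj, hjS, hx]

lemma mask_eq_sum_single (S : Finset (Fin n)) (x : Fin n → ℝ) :
    mask S x = ∑ i ∈ S, Pi.single i (x i) := by
  ext j
  simp [mask_apply, Finset.sum_apply, Pi.single_apply]

lemma mask_filter_not_add_mask_filter (p : Fin n → Prop) [DecidablePred p] :
    mask (S.filter (¬ p ·)) x + mask (S.filter p) x = mask S x := by
  ext i
  by_cases hi : i ∈ S <;> by_cases hp : p i <;> simp [mask_apply, hi, hp]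

lemma apply_mask_le_add_sum_filter (hF_mono : Monotone F)
    (hF_sub : ∀ x y, F (x + y) ≤ F x + F y) (p : Fin n → Prop) [DecidablePred p]
    (hyx : ∀ i ∈ S, ¬ p i → y i ≤ x i) (hx : ∀ i ∈ S, p i → 0 ≤ x i) :
    F (mask S y) ≤ F (mask S x) + ∑ i ∈ S with p i, F (Pi.single i (y i)) := by
  have hle : mask (S.filter (¬ p ·)) y ≤ mask S x := fun i => by
    by_cases hi : i ∈ S <;> by_cases hp : p i <;> simp [mask_apply, hi, hp, hyx, hx]
  calc F (mask S y) = F (mask (S.filter (¬ p ·)) y + ∑ i ∈ S with p i, Pi.single i (y i)) := by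
        rw [← mask_eq_sum_single, mask_filter_not_add_mask_filter]
    _ ≤ F (mask (S.filter (¬ p ·)) y) + ∑ i ∈ S with p i, F (Pi.single i (y i)) :=
        apply_add_sum_le_of_subadditive hF_sub _ _ _
    _ ≤ _ := by gcongr; exact hF_mono hle

lemma mul_apply_mask_le_sum (hF_mono : Monotone F) (hF_sub : ∀ x y, F (x + y) ≤ F x + F y)
    (hS : S.Nonempty) {r : ℝ} {q : Fin n → ℝ} (hr : 0 ≤ r) (hq : ∀ i ∈ S, r ≤ q i)
    (hx : ∀ i, 0 ≤ x i) (hxy : ∀ i, x i ≤ y i) :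
    r * F (mask S x) ≤ ∑ i ∈ S, q i * F (Pi.single i (y i)) := by
  have hsum : F (mask S x) ≤ ∑ i ∈ S, F (Pi.single i (y i)) := by
    rw [mask_eq_sum_single]
    exact (Finset.le_sum_nonempty_of_subadditive F hF_sub hS _).trans
      (Finset.sum_le_sum fun i _ => hF_mono (Pi.single_mono i (hxy i)))
  calc r * F (mask S x) ≤ ∑ i ∈ S, r * F (Pi.single i (y i)) := by
        rw [← Finset.mul_sum]
        exact mul_le_mul_of_nonneg_left hsum hr
    _ ≤ ∑ i ∈ S, q i * F (Pi.single i (y i)) := Finset.sum_le_sum fun i hi =>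
        mul_le_mul_of_nonneg_right (hq i hi) (apply_nonneg_of_subadditive hF_mono hF_sub
          (Pi.single_nonneg.2 ((hx i).trans (hxy i))))

end Mask

section Truncation

variable {n : ℕ} {F : (Fin n → ℝ) → ℝ} {S : Finset (Fin n)} {τ c x xhat xtil y : Fin n → ℝ}
  {a ε : ℝ}

lemma nonneg_of_truncation {x τ c xhat xtil a : ℝ} (hx : 0 ≤ x) (hc : 0 ≤ c)
    (hxhat : xhat = if x ≤ τ then x else c) (hxtil : xtil = if a * τ < xhat then xhat else 0) :
    0 ≤ xhat ∧ 0 ≤ xtil := by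
  have hxhat0 : 0 ≤ xhat := by rw [hxhat]; split_ifs <;> assumption
  exact ⟨hxhat0, by rw [hxtil]; split_ifs <;> simp [hxhat0]⟩

lemma sum_filter_lt_eq_sum_indicator (g : Fin n → ℝ → ℝ) :
    ∑ i ∈ S with τ i < x i, g i (x i) = ∑ i ∈ S, (Ioi (τ i)).indicator (g i) (x i) := by
  simp [Finset.sum_filter, Set.indicator_apply]

lemma apply_mask_le_div_add_sum_indicator (hF_mono : Monotone F)
    (hF_sub : ∀ x y, F (x + y) ≤ F x + F y) (hF_conc : ConcaveOn ℝ univ F) (hτ : ∀ i, 0 ≤ τ i)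
    (hc : ∀ i, 0 ≤ c i) (ha : 0 ≤ a) (hε0 : 0 ≤ ε) (hε1 : ε < 1)
    (hxhat : ∀ i, xhat i = if x i ≤ τ i then x i else c i)
    (hxtil : ∀ i, xtil i = if a * τ i < xhat i then xhat i else 0)
    (hy : ∀ i, (1 - ε) * xtil i ≤ y i) :
    F (mask S x) ≤ F (mask S y) / (1 - ε) + a * F (mask S τ)
      + ∑ i ∈ S, (Ioi (τ i)).indicator (fun t => F (Pi.single i t)) (x i) := by
  have hcut : F (mask S x) ≤ F (mask S xhat)
      + ∑ i ∈ S, (Ioi (τ i)).indicator (fun t => F (Pi.single i t)) (x i) := by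
    rw [← sum_filter_lt_eq_sum_indicator]
    refine apply_mask_le_add_sum_filter hF_mono hF_sub _ (fun i _ hi => ?_) fun i _ hi => ?_
    · rw [hxhat, if_pos (not_lt.1 hi)]
    · rw [hxhat, if_neg (not_le.2 hi)]
      exact hc i
  have hhat : F (mask S xhat) ≤ F (mask S xtil) + a * F (mask S τ) := by
    refine (hF_mono fun i => ?_).trans (hF_conc.apply_add_smul_le hF_sub ha _ _)
    by_cases hi : i ∈ S
    · simp only [Pi.add_apply, Pi.smul_apply, smul_eq_mul, mask_apply, if_pos hi, hxtil]
      split_ifs <;> nlinarith [hτ i]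
    · simp [mask_apply, hi]
  have htil : (1 - ε) * F (mask S xtil) ≤ F (mask S y) :=
    hF_conc.mul_apply_le_of_smul_le hF_mono (apply_nonneg_of_subadditive hF_mono hF_sub le_rfl)
      (by linarith) (by linarith) (smul_mask_le_mask fun i _ => hy i)
  rw [← le_div_iff₀' (by linarith)] at htil
  linarith

lemma apply_mask_le_add_sum_indicator (hF_mono : Monotone F)
    (hF_sub : ∀ x y, F (x + y) ≤ F x + F y) (hx : ∀ i, 0 ≤ x i) (hc : ∀ i, 0 ≤ c i)
    (hxhat : ∀ i, xhat i = if x i ≤ τ i then x i else c i)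
    (hxtil : ∀ i, xtil i = if a * τ i < xhat i then xhat i else 0) (hy : ∀ i, y i ≤ xtil i) :
    F (mask S y) ≤ F (mask S x)
      + ∑ i ∈ S, (Ioi (τ i)).indicator (fun _ => F (Pi.single i (c i))) (x i) := by
  have hxhat0 : ∀ i, 0 ≤ xhat i := fun i =>
    (nonneg_of_truncation (hx i) (hc i) (hxhat i) (hxtil i)).1
  have hyhat : F (mask S y) ≤ F (mask S xhat) := hF_mono <| mask_le_mask fun i _ =>
    (hy i).trans (by rw [hxtil]; split_ifs <;> simp [hxhat0])
  have hcut := apply_mask_le_add_sum_filter hF_mono hF_sub (S := S) (y := xhat) (x := x)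
    (fun i => τ i < x i) (fun i _ hi => by rw [hxhat, if_pos (not_lt.1 hi)]) fun i _ _ => hx i
  rw [Finset.sum_congr rfl fun i hi => by
    rw [hxhat, if_neg (not_le.2 (Finset.mem_filter.1 hi).2)], sum_filter_lt_eq_sum_indicator
    (g := fun i _ => F (Pi.single i (c i)))] at hcut
  exact hyhat.trans hcut

lemma indicator_const_le_apply_mask (hF_mono : Monotone F)
    (hF_sub : ∀ x y, F (x + y) ≤ F x + F y) (hF_conc : ConcaveOn ℝ univ F) (hx : ∀ i, 0 ≤ x i)
    (hτ : ∀ i, 0 ≤ τ i) (hc : ∀ i, τ i < c i) (ha : a ≤ 1) (hε0 : 0 ≤ ε) (hε1 : ε ≤ 1)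
    (hxhat : ∀ i, xhat i = if x i ≤ τ i then x i else c i)
    (hxtil : ∀ i, xtil i = if a * τ i < xhat i then xhat i else 0)
    (hy : ∀ i, (1 - ε) * xtil i ≤ y i) {i : Fin n} (hi : i ∈ S) :
    (Ioi (τ i)).indicator (fun _ => (1 - ε) * F (Pi.single i (c i))) (x i) ≤ F (mask S y) := by
  have hxtil0 : ∀ j, 0 ≤ xtil j := fun j =>
    (nonneg_of_truncation (hx j) ((hτ j).trans (hc j).le) (hxhat j) (hxtil j)).2
  by_cases hτx : τ i < x i
  · have hxtil_i : xtil i = c i := by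
      have : a * τ i < c i := by nlinarith [hτ i, hc i]
      rw [hxtil, hxhat, if_neg (not_le.2 hτx), if_pos this]
    rw [indicator_of_mem (mem_Ioi.2 hτx), ← hxtil_i]
    exact hF_conc.mul_apply_le_of_smul_le hF_mono
      (apply_nonneg_of_subadditive hF_mono hF_sub le_rfl) (by linarith) (by linarith)
      ((smul_le_smul_of_nonneg_left (single_le_mask hi fun j _ => hxtil0 j) (by linarith)).trans
        (smul_mask_le_mask fun j _ => hy j))
  · rw [indicator_of_notMem (mt mem_Ioi.1 hτx)]
    exact apply_nonneg_of_subadditive hF_mono hF_sub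
      (mask_nonneg fun j _ => (mul_nonneg (by linarith) (hxtil0 j)).trans (hy j))

lemma indicator_apply_single_le_apply_mask (hF_mono : Monotone F)
    (hF_sub : ∀ x y, F (x + y) ≤ F x + F y) (hx : ∀ i, 0 ≤ x i) {i : Fin n} (hi : i ∈ S) :
    (Ioi (τ i)).indicator (fun t => F (Pi.single i t)) (x i) ≤ F (mask S x) := by
  by_cases hτx : τ i < x i
  · rw [indicator_of_mem (mem_Ioi.2 hτx)]
    exact hF_mono (single_le_mask hi fun j _ => hx j)
  · rw [indicator_of_notMem (mt mem_Ioi.1 hτx)]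
    exact apply_nonneg_of_subadditive hF_mono hF_sub (mask_nonneg fun j _ => hx j)

end Truncation

section FirstExceedance

variable {ι Ω : Type*} [LinearOrder ι] {mΩ : MeasurableSpace Ω} {μ : Measure Ω}
  {X : ι → Ω → ℝ} {S : Finset ι} {τ : ι → ℝ}

def noExceedanceBefore (S : Finset ι) (X : ι → Ω → ℝ) (τ : ι → ℝ) (i : ι) : Set Ω :=
  {ω | ∀ j ∈ S, j < i → X j ω ≤ τ j}

lemma noExceedanceBefore_eq_biInter (i : ι) :
    noExceedanceBefore S X τ i = ⋂ j ∈ S.filter (· < i), X j ⁻¹' Iic (τ j) := by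
  ext ω
  simp [noExceedanceBefore]

lemma measurableSet_noExceedanceBefore (i : ι) :
    MeasurableSet[⨆ j ∈ {j | j < i}, MeasurableSpace.comap (X j) inferInstance]
      (noExceedanceBefore S X τ i) := by
  rw [noExceedanceBefore_eq_biInter]
  refine Finset.measurableSet_biInter _ fun j hj => ?_
  exact le_iSup₂ (f := fun j (_ : j ∈ {j | j < i}) => MeasurableSpace.comap (X j) inferInstance) j
    (Finset.mem_filter.1 hj).2 _ ⟨_, measurableSet_Iic, rfl⟩

lemma measureReal_noExceedanceBefore (hX_indep : iIndepFun X μ) (i : ι) :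
    μ.real (noExceedanceBefore S X τ i) = ∏ j ∈ S with j < i, μ.real {ω | X j ω ≤ τ j} := by
  rw [noExceedanceBefore_eq_biInter, measureReal_def,
    hX_indep.meas_biInter fun j _ => ⟨_, measurableSet_Iic, rfl⟩, ENNReal.toReal_prod]
  rfl

lemma pow_le_measureReal_noExceedanceBefore [IsProbabilityMeasure μ] (hX_indep : iIndepFun X μ)
    {k : ℕ} (hS : S.card ≤ k) {p : ℝ} (hp0 : 0 ≤ p)
    (hp : ∀ j ∈ S, p ≤ μ.real {ω | X j ω ≤ τ j}) {i : ι} (hi : i ∈ S) :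
    p ^ (k - 1) ≤ μ.real (noExceedanceBefore S X τ i) := by
  have hp1 : p ≤ 1 := (hp i hi).trans measureReal_le_one
  have hcard : (S.filter (· < i)).card ≤ k - 1 := by
    have : S.filter (· < i) ⊆ S.erase i := fun j hj => by
      simp only [Finset.mem_filter] at hj
      exact Finset.mem_erase.2 ⟨hj.2.ne, hj.1⟩
    have := Finset.card_le_card this
    rw [Finset.card_erase_of_mem hi] at this
    omega
  calc p ^ (k - 1) ≤ p ^ (S.filter (· < i)).card := pow_le_pow_of_le_one hp0 hp1 hcard
    _ = ∏ _j ∈ S.filter (· < i), p := (Finset.prod_const p).symm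
    _ ≤ _ := by
      rw [measureReal_noExceedanceBefore hX_indep]
      exact Finset.prod_le_prod (fun _ _ => hp0) fun j hj => hp j (Finset.mem_filter.1 hj).1

lemma setIntegral_noExceedanceBefore (hX_meas : ∀ i, Measurable (X i)) (hX_indep : iIndepFun X μ)
    {ψ : ℝ → ℝ} (hψ : Measurable ψ) (i : ι) :
    ∫ ω in noExceedanceBefore S X τ i, ψ (X i ω) ∂μ
      = μ.real (noExceedanceBefore S X τ i) * ∫ ω, ψ (X i ω) ∂μ := by
  have hindep := indep_iSup_of_disjoint (fun j => (hX_meas j).comap_le) hX_indep.iIndep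
    (S := {j | j < i}) (T := {i}) (by simp)
  rw [iSup_singleton] at hindep
  exact hindep.setIntegral_eq_mul (iSup₂_le fun j _ => (hX_meas j).comap_le)
    (hX_meas i).aemeasurable (measurableSet_noExceedanceBefore i) hψ.aestronglyMeasurable

lemma sum_indicator_noExceedanceBefore_le {ψ : ι → ℝ → ℝ} (hψ_zero : ∀ i x, x ≤ τ i → ψ i x = 0)
    {Φ : Ω → ℝ} (hΦ : ∀ ω, 0 ≤ Φ ω) (hψΦ : ∀ i ∈ S, ∀ ω, ψ i (X i ω) ≤ Φ ω) (ω : Ω) :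
    ∑ i ∈ S, (noExceedanceBefore S X τ i).indicator (fun ω => ψ i (X i ω)) ω ≤ Φ ω := by
  set g := fun i => (noExceedanceBefore S X τ i).indicator (fun ω => ψ i (X i ω)) ω
  have hsupp : ∀ i, g i ≠ 0 → ω ∈ noExceedanceBefore S X τ i ∧ τ i < X i ω := fun i hi => by
    by_contra h
    refine hi ?_
    by_cases hω : ω ∈ noExceedanceBefore S X τ i
    · simp only [g, indicator_of_mem hω]
      exact hψ_zero i _ (not_lt.1 fun h' => h ⟨hω, h'⟩)
    · exact indicator_of_notMem hω _
  have hunique : ∀ i ∈ S, ∀ j ∈ S, g i ≠ 0 → g j ≠ 0 → i = j := fun i hi j hj hgi hgj => by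
    obtain ⟨hBi, hτi⟩ := hsupp i hgi
    obtain ⟨hBj, hτj⟩ := hsupp j hgj
    by_contra hij
    rcases lt_or_gt_of_ne hij with h | h
    · exact (hBj i hi h).not_gt hτi
    · exact (hBi j hj h).not_gt hτj
  by_cases h : ∃ i ∈ S, g i ≠ 0
  · obtain ⟨i, hi, hgi⟩ := h
    rw [Finset.sum_eq_single_of_mem i hi fun j hj hji => not_not.1 fun hgj =>
      hji (hunique j hj i hi hgj hgi)]
    simp only [g, indicator_of_mem (hsupp i hgi).1]
    exact hψΦ i hi ω
  · push Not at h
    rw [Finset.sum_eq_zero h]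
    exact hΦ ω

theorem pow_mul_sum_integral_le_integral [IsProbabilityMeasure μ]
    (hX_meas : ∀ i, Measurable (X i)) (hX_indep : iIndepFun X μ) {k : ℕ} (hS : S.card ≤ k)
    {p : ℝ} (hp0 : 0 ≤ p) (hp : ∀ j ∈ S, p ≤ μ.real {ω | X j ω ≤ τ j})
    {ψ : ι → ℝ → ℝ} (hψ_meas : ∀ i, Measurable (ψ i)) (hψ_nonneg : ∀ i x, 0 ≤ ψ i x)
    (hψ_zero : ∀ i x, x ≤ τ i → ψ i x = 0) (hψ_int : ∀ i ∈ S, Integrable (fun ω => ψ i (X i ω)) μ)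
    {Φ : Ω → ℝ} (hΦ_int : Integrable Φ μ) (hΦ : ∀ ω, 0 ≤ Φ ω)
    (hψΦ : ∀ i ∈ S, ∀ ω, ψ i (X i ω) ≤ Φ ω) :
    p ^ (k - 1) * ∑ i ∈ S, ∫ ω, ψ i (X i ω) ∂μ ≤ ∫ ω, Φ ω ∂μ := by
  have hB : ∀ i, MeasurableSet (noExceedanceBefore S X τ i) := fun i =>
    iSup₂_le (fun j _ => (hX_meas j).comap_le) _ (measurableSet_noExceedanceBefore i)
  have hint : ∀ i ∈ S, Integrable
      ((noExceedanceBefore S X τ i).indicator fun ω => ψ i (X i ω)) μ :=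
    fun i hi => (hψ_int i hi).indicator (hB i)
  calc p ^ (k - 1) * ∑ i ∈ S, ∫ ω, ψ i (X i ω) ∂μ
      ≤ ∑ i ∈ S, μ.real (noExceedanceBefore S X τ i) * ∫ ω, ψ i (X i ω) ∂μ := by
        rw [Finset.mul_sum]
        exact Finset.sum_le_sum fun i hi => mul_le_mul_of_nonneg_right
          (pow_le_measureReal_noExceedanceBefore hX_indep hS hp0 hp hi)
          (integral_nonneg fun ω => hψ_nonneg i _)
    _ = ∫ ω, ∑ i ∈ S, (noExceedanceBefore S X τ i).indicator (fun ω => ψ i (X i ω)) ω ∂μ := by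
        rw [integral_finsetSum S hint]
        refine Finset.sum_congr rfl fun i _ => ?_
        rw [integral_indicator (hB i), setIntegral_noExceedanceBefore hX_meas hX_indep (hψ_meas i)]
    _ ≤ ∫ ω, Φ ω ∂μ := integral_mono (integrable_finsetSum S hint) hΦ_int
        (sum_indicator_noExceedanceBefore_le hψ_zero hΦ hψΦ)

end FirstExceedance

section Integration

variable {Ω : Type*} {mΩ : MeasurableSpace Ω} {μ : Measure Ω}

lemma indicator_Ioi_comp (X : Ω → ℝ) (τ : ℝ) (g : ℝ → ℝ) :
    (fun ω => (Ioi τ).indicator g (X ω)) = {ω | τ < X ω}.indicator fun ω => g (X ω) := by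
  ext ω
  simp [indicator_apply]

lemma integrable_indicator_Ioi_comp {X : Ω → ℝ} (hX : Measurable X) {g : ℝ → ℝ}
    (hg : Integrable (fun ω => g (X ω)) μ) (τ : ℝ) :
    Integrable (fun ω => (Ioi τ).indicator g (X ω)) μ := by
  rw [indicator_Ioi_comp]
  exact hg.indicator (measurableSet_lt measurable_const hX)

lemma integral_indicator_Ioi_comp {X : Ω → ℝ} (hX : Measurable X) (τ : ℝ) (g : ℝ → ℝ) :
    ∫ ω, (Ioi τ).indicator g (X ω) ∂μ = ∫ ω in {ω | τ < X ω}, g (X ω) ∂μ := by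
  rw [indicator_Ioi_comp, integral_indicator (measurableSet_lt measurable_const hX)]

lemma integral_le_add_add_sum {ι : Type*} {S : Finset ι} {G₁ G₂ : Ω → ℝ} {C : ℝ}
    {ψ : ι → Ω → ℝ} [IsProbabilityMeasure μ] (hG₁ : Integrable G₁ μ) (hG₂ : Integrable G₂ μ)
    (hψ : ∀ i ∈ S, Integrable (ψ i) μ) (h : ∀ ω, G₁ ω ≤ G₂ ω + C + ∑ i ∈ S, ψ i ω) :
    ∫ ω, G₁ ω ∂μ ≤ ∫ ω, G₂ ω ∂μ + C + ∑ i ∈ S, ∫ ω, ψ i ω ∂μ := by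
  have hsum : Integrable (fun ω => ∑ i ∈ S, ψ i ω) μ := integrable_finsetSum S hψ
  have hG₂C : Integrable (fun ω => G₂ ω + C) μ := hG₂.add (integrable_const C)
  calc ∫ ω, G₁ ω ∂μ ≤ ∫ ω, G₂ ω + C + ∑ i ∈ S, ψ i ω ∂μ := integral_mono hG₁ (hG₂C.add hsum) h
    _ = _ := by
        rw [integral_add hG₂C hsum, integral_add hG₂ (integrable_const C),
          integral_finsetSum S hψ, integral_const, probReal_univ, one_smul]

end Integration

lemma half_mul_le_of_le_add {ε Δ u v Q : ℝ} {k : ℕ} (hε0 : 0 < ε) (hε1 : ε < 1) (hΔ : 0 ≤ Δ)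
    (hu : 0 ≤ u) (hv : 0 ≤ v) (hvu : v ≤ u + Q) (hQu : (1 - ε) ^ (k - 1) * Q ≤ u) :
    1 / 2 * (1 - ε) ^ (k - 1) * (1 - Δ / ε) * v ≤ u := by
  have hP0 : 0 ≤ (1 - ε) ^ (k - 1) := pow_nonneg (by linarith) _
  have hP1 : (1 - ε) ^ (k - 1) ≤ 1 := pow_le_one₀ (by linarith) (by linarith)
  have hr : 0 ≤ Δ / ε := div_nonneg hΔ hε0.le
  have hPv : (1 - ε) ^ (k - 1) * v ≤ 2 * u := by nlinarith
  nlinarith [mul_nonneg hP0 hv, mul_nonneg (mul_nonneg hP0 hv) hr]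

lemma le_mul_of_le_add_add {ε Δ a u v Q T : ℝ} {k : ℕ} (hk : 1 ≤ k) (hε0 : 0 < ε) (hε1 : ε < 1)
    (hΔ0 : 0 ≤ Δ) (hΔε : Δ < ε) (ha : 0 ≤ a) (hv : 0 ≤ v)
    (hu : u ≤ v / (1 - ε) + a * T + Q) (hQv : (1 - ε) ^ k * Q ≤ v) (hTQ : (ε - Δ) * T ≤ Q) :
    u ≤ 2 * (1 + a * k / (ε - Δ)) / ((1 - ε) ^ k * (1 - Δ / ε)) * v := by
  set P := (1 - ε) ^ k
  have hP0 : 0 < P := pow_pos (by linarith) _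
  have hP1 : P ≤ 1 - ε := by
    calc P ≤ (1 - ε) ^ 1 := pow_le_pow_of_le_one (by linarith) (by linarith) hk
      _ = 1 - ε := pow_one _
  have hr0 : 0 < 1 - Δ / ε := by rw [sub_pos, div_lt_one hε0]; exact hΔε
  have hr1 : 1 - Δ / ε ≤ 1 := by have := div_nonneg hΔ0 hε0.le; linarith
  have hεΔ : 0 < ε - Δ := by linarith
  have hk' : (1 : ℝ) ≤ k := by exact_mod_cast hk
  have hQ : Q ≤ v / P := by rw [le_div_iff₀ hP0]; linarith
  have hT : T ≤ v / P / (ε - Δ) := by rw [le_div_iff₀ hεΔ]; nlinarith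
  have h1 : v / (1 - ε) ≤ v / P := div_le_div_of_nonneg_left hv hP0 hP1
  have h2 : v / P ≤ v / (P * (1 - Δ / ε)) :=
    div_le_div_of_nonneg_left hv (mul_pos hP0 hr0) (by nlinarith)
  have h3 : a * (v / P / (ε - Δ)) ≤ 2 * a * k * v / ((ε - Δ) * (P * (1 - Δ / ε))) := by
    rw [div_div, ← mul_div_assoc, div_le_div_iff₀ (by positivity) (by positivity)]
    have : 0 ≤ a * v * (P * (ε - Δ)) := by positivity
    nlinarith [mul_le_mul_of_nonneg_left (show 1 - Δ / ε ≤ 2 * k by linarith) this]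
  calc u ≤ v / (1 - ε) + a * T + Q := hu
    _ ≤ v / P + a * (v / P / (ε - Δ)) + v / P := by gcongr
    _ ≤ 2 * (v / (P * (1 - Δ / ε))) + 2 * a * k * v / ((ε - Δ) * (P * (1 - Δ / ε))) := by
        linarith
    _ = 2 * (1 + a * k / (ε - Δ)) / (P * (1 - Δ / ε)) * v := by
        field_simp

section Sketch

variable {Ω : Type*} {mΩ : MeasurableSpace Ω} {μ : Measure Ω} [IsProbabilityMeasure μ] {n : ℕ}
  {X Xhat Xtil Y : Fin n → Ω → ℝ} {F : (Fin n → ℝ) → ℝ} {τ c : Fin n → ℝ} {a ε Δ : ℝ}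
  {S : Finset (Fin n)} {k : ℕ}

def tailMass (μ : Measure Ω) (X : Fin n → Ω → ℝ) (τ c : Fin n → ℝ) (F : (Fin n → ℝ) → ℝ)
    (S : Finset (Fin n)) : ℝ :=
  ∑ i ∈ S, μ.real {ω | τ i < X i ω} * F (Pi.single i (c i))

lemma sub_le_measureReal_lt {X : Ω → ℝ} (hX : Measurable X) {τ : ℝ}
    (h : μ.real {ω | X ω ≤ τ} ≤ 1 - ε + Δ) : ε - Δ ≤ μ.real {ω | τ < X ω} := by
  have hcompl := probReal_compl_eq_one_sub (μ := μ) (s := {ω | X ω ≤ τ})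
    (measurableSet_le hX measurable_const)
  rw [show {ω | X ω ≤ τ}ᶜ = {ω | τ < X ω} by ext; simp] at hcompl
  linarith

lemma integral_apply_mask_le_add_tailMass (hX_meas : ∀ i, Measurable (X i))
    (hX_nonneg : ∀ i ω, 0 ≤ X i ω) (hF_mono : Monotone F) (hF_sub : ∀ x y, F (x + y) ≤ F x + F y)
    (hc0 : ∀ i, 0 ≤ c i) (hXhat : ∀ i ω, Xhat i ω = if X i ω ≤ τ i then X i ω else c i)
    (hXtil : ∀ i ω, Xtil i ω = if a * τ i < Xhat i ω then Xhat i ω else 0)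
    (hY : ∀ i ω, Y i ω ≤ Xtil i ω) (hu_int : Integrable (fun ω => F (mask S fun i => X i ω)) μ)
    (hv_int : Integrable (fun ω => F (mask S fun i => Y i ω)) μ) :
    ∫ ω, F (mask S fun i => Y i ω) ∂μ
      ≤ ∫ ω, F (mask S fun i => X i ω) ∂μ + tailMass μ X τ c F S := by
  have h := integral_le_add_add_sum (C := 0) hv_int hu_int
    (fun i _ => integrable_indicator_Ioi_comp (hX_meas i) (integrable_const _) (τ i)) fun ω => by
      simpa using apply_mask_le_add_sum_indicator hF_mono hF_sub (fun i => hX_nonneg i ω) hc0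
        (fun i => hXhat i ω) (fun i => hXtil i ω) fun i => hY i ω
  simpa [tailMass, integral_indicator_Ioi_comp (hX_meas _), setIntegral_const] using h

lemma integral_apply_mask_le_div_add_tailMass (hX_meas : ∀ i, Measurable (X i))
    (hF_mono : Monotone F) (hF_sub : ∀ x y, F (x + y) ≤ F x + F y) (hF_conc : ConcaveOn ℝ univ F)
    (hε0 : 0 ≤ ε) (hε1 : ε < 1) (hτ : ∀ i, 0 ≤ τ i) (hc0 : ∀ i, 0 ≤ c i)
    (hH : ∀ i, ∫ ω in {ω | τ i < X i ω}, F (Pi.single i (X i ω)) ∂μ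
      = μ.real {ω | τ i < X i ω} * F (Pi.single i (c i)))
    (hH_int : ∀ i, Integrable (fun ω => F (Pi.single i (X i ω))) μ)
    (hXhat : ∀ i ω, Xhat i ω = if X i ω ≤ τ i then X i ω else c i) (ha : 0 ≤ a)
    (hXtil : ∀ i ω, Xtil i ω = if a * τ i < Xhat i ω then Xhat i ω else 0)
    (hY : ∀ i ω, (1 - ε) * Xtil i ω ≤ Y i ω)
    (hu_int : Integrable (fun ω => F (mask S fun i => X i ω)) μ)
    (hv_int : Integrable (fun ω => F (mask S fun i => Y i ω)) μ) :
    ∫ ω, F (mask S fun i => X i ω) ∂μ ≤ (∫ ω, F (mask S fun i => Y i ω) ∂μ) / (1 - ε)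
      + a * F (mask S τ) + tailMass μ X τ c F S := by
  have h := integral_le_add_add_sum hu_int (hv_int.div_const (1 - ε))
    (fun i _ => integrable_indicator_Ioi_comp (hX_meas i) (hH_int i) (τ i))
    fun ω => apply_mask_le_div_add_sum_indicator hF_mono hF_sub hF_conc hτ hc0 ha hε0 hε1
      (fun i => hXhat i ω) (fun i => hXtil i ω) fun i => hY i ω
  simpa only [tailMass, integral_div, integral_indicator_Ioi_comp (hX_meas _), hH] using h

lemma pow_mul_tailMass_le_integral_apply_mask (hX_meas : ∀ i, Measurable (X i))
    (hX_nonneg : ∀ i ω, 0 ≤ X i ω) (hX_indep : iIndepFun X μ) (hF_mono : Monotone F)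
    (hF_sub : ∀ x y, F (x + y) ≤ F x + F y) (hF_conc : ConcaveOn ℝ univ F) (hε : ε ≤ 1)
    (hτ : ∀ i, 0 ≤ τ i) (hp : ∀ i, 1 - ε ≤ μ.real {ω | X i ω ≤ τ i})
    (hH : ∀ i, ∫ ω in {ω | τ i < X i ω}, F (Pi.single i (X i ω)) ∂μ
      = μ.real {ω | τ i < X i ω} * F (Pi.single i (c i)))
    (hH_int : ∀ i, Integrable (fun ω => F (Pi.single i (X i ω))) μ)
    (hu_int : Integrable (fun ω => F (mask S fun i => X i ω)) μ) (hS : S.card ≤ k) :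
    (1 - ε) ^ (k - 1) * tailMass μ X τ c F S ≤ ∫ ω, F (mask S fun i => X i ω) ∂μ := by
  have hF_cont : Continuous F := hF_conc.locallyLipschitz.continuous
  have h := pow_mul_sum_integral_le_integral hX_meas hX_indep hS (by linarith) (fun j _ => hp j)
    (ψ := fun i => (Ioi (τ i)).indicator fun t => F (Pi.single i t))
    (fun i => (hF_cont.comp (continuous_single i)).measurable.indicator measurableSet_Ioi)
    (fun i => indicator_nonneg fun t ht => apply_nonneg_of_subadditive hF_mono hF_sub
      (Pi.single_nonneg.2 ((hτ i).trans (le_of_lt ht))))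
    (fun i t ht => indicator_of_notMem (not_lt.2 ht) _)
    (fun i _ => integrable_indicator_Ioi_comp (hX_meas i) (hH_int i) (τ i)) hu_int
    (fun ω => apply_nonneg_of_subadditive hF_mono hF_sub (mask_nonneg fun i _ => hX_nonneg i ω))
    fun i hi ω => indicator_apply_single_le_apply_mask hF_mono hF_sub (fun j => hX_nonneg j ω) hi
  simpa only [tailMass, integral_indicator_Ioi_comp (hX_meas _), hH] using h

lemma pow_mul_tailMass_le_integral_apply_mask_of_truncation (hX_meas : ∀ i, Measurable (X i))
    (hX_nonneg : ∀ i ω, 0 ≤ X i ω) (hX_indep : iIndepFun X μ) (hF_mono : Monotone F)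
    (hF_sub : ∀ x y, F (x + y) ≤ F x + F y) (hF_conc : ConcaveOn ℝ univ F) (hk : 1 ≤ k)
    (hε0 : 0 ≤ ε) (hε1 : ε ≤ 1) (hτ : ∀ i, 0 ≤ τ i) (hc : ∀ i, τ i < c i)
    (hp : ∀ i, 1 - ε ≤ μ.real {ω | X i ω ≤ τ i})
    (hXhat : ∀ i ω, Xhat i ω = if X i ω ≤ τ i then X i ω else c i) (ha : a ≤ 1)
    (hXtil : ∀ i ω, Xtil i ω = if a * τ i < Xhat i ω then Xhat i ω else 0)
    (hY0 : ∀ i ω, 0 ≤ Y i ω) (hY : ∀ i ω, (1 - ε) * Xtil i ω ≤ Y i ω)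
    (hv_int : Integrable (fun ω => F (mask S fun i => Y i ω)) μ) (hS : S.card ≤ k) :
    (1 - ε) ^ k * tailMass μ X τ c F S ≤ ∫ ω, F (mask S fun i => Y i ω) ∂μ := by
  have h := pow_mul_sum_integral_le_integral hX_meas hX_indep hS (by linarith) (fun j _ => hp j)
    (ψ := fun i => (Ioi (τ i)).indicator fun _ => (1 - ε) * F (Pi.single i (c i)))
    (fun i => measurable_const.indicator measurableSet_Ioi)
    (fun i => indicator_nonneg fun _ _ => mul_nonneg (by linarith)
      (apply_nonneg_of_subadditive hF_mono hF_sub (Pi.single_nonneg.2 ((hτ i).trans (hc i).le))))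
    (fun i t ht => indicator_of_notMem (not_lt.2 ht) _)
    (fun i _ => integrable_indicator_Ioi_comp (hX_meas i) (integrable_const _) (τ i)) hv_int
    (fun ω => apply_nonneg_of_subadditive hF_mono hF_sub (mask_nonneg fun i _ => hY0 i ω))
    fun i hi ω => indicator_const_le_apply_mask hF_mono hF_sub hF_conc (fun j => hX_nonneg j ω)
      hτ hc ha hε0 hε1 (fun j => hXhat j ω) (fun j => hXtil j ω) (fun j => hY j ω) hi
  simp only [integral_indicator_Ioi_comp (hX_meas _), setIntegral_const, smul_eq_mul] at h
  calc _ = (1 - ε) ^ (k - 1) * ∑ i ∈ S, μ.real {ω | τ i < X i ω}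
        * ((1 - ε) * F (Pi.single i (c i))) := by
        rw [tailMass, ← pow_sub_one_mul (by omega : k ≠ 0), Finset.mul_sum, Finset.mul_sum]
        exact Finset.sum_congr rfl fun i _ => by ring
    _ ≤ _ := h

theorem half_mul_integral_apply_mask_le (hX_meas : ∀ i, Measurable (X i))
    (hX_nonneg : ∀ i ω, 0 ≤ X i ω) (hX_indep : iIndepFun X μ) (hF_mono : Monotone F)
    (hF_sub : ∀ x y, F (x + y) ≤ F x + F y) (hF_conc : ConcaveOn ℝ univ F) (hε0 : 0 < ε)
    (hε1 : ε < 1) (hΔ : 0 ≤ Δ) (hτ : ∀ i, 0 ≤ τ i) (hc0 : ∀ i, 0 ≤ c i)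
    (hp : ∀ i, 1 - ε ≤ μ.real {ω | X i ω ≤ τ i})
    (hH : ∀ i, ∫ ω in {ω | τ i < X i ω}, F (Pi.single i (X i ω)) ∂μ
      = μ.real {ω | τ i < X i ω} * F (Pi.single i (c i)))
    (hH_int : ∀ i, Integrable (fun ω => F (Pi.single i (X i ω))) μ)
    (hXhat : ∀ i ω, Xhat i ω = if X i ω ≤ τ i then X i ω else c i)
    (hXtil : ∀ i ω, Xtil i ω = if a * τ i < Xhat i ω then Xhat i ω else 0)
    (hY0 : ∀ i ω, 0 ≤ Y i ω) (hY : ∀ i ω, Y i ω ≤ Xtil i ω)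
    (hu_int : Integrable (fun ω => F (mask S fun i => X i ω)) μ)
    (hv_int : Integrable (fun ω => F (mask S fun i => Y i ω)) μ) (hS : S.card ≤ k) :
    1 / 2 * (1 - ε) ^ (k - 1) * (1 - Δ / ε) * ∫ ω, F (mask S fun i => Y i ω) ∂μ
      ≤ ∫ ω, F (mask S fun i => X i ω) ∂μ :=
  half_mul_le_of_le_add hε0 hε1 hΔ
    (integral_nonneg fun ω =>
      apply_nonneg_of_subadditive hF_mono hF_sub (mask_nonneg fun i _ => hX_nonneg i ω))
    (integral_nonneg fun ω =>
      apply_nonneg_of_subadditive hF_mono hF_sub (mask_nonneg fun i _ => hY0 i ω))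
    (integral_apply_mask_le_add_tailMass hX_meas hX_nonneg hF_mono hF_sub hc0 hXhat hXtil hY
      hu_int hv_int)
    (pow_mul_tailMass_le_integral_apply_mask hX_meas hX_nonneg hX_indep hF_mono hF_sub hF_conc
      hε1.le hτ hp hH hH_int hu_int hS)

theorem integral_apply_mask_le_mul (hX_meas : ∀ i, Measurable (X i))
    (hX_nonneg : ∀ i ω, 0 ≤ X i ω) (hX_indep : iIndepFun X μ) (hF_mono : Monotone F)
    (hF_sub : ∀ x y, F (x + y) ≤ F x + F y) (hF_conc : ConcaveOn ℝ univ F) (hk : 1 ≤ k)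
    (hε0 : 0 < ε) (hε1 : ε < 1) (hΔ0 : 0 ≤ Δ) (hΔε : Δ < ε) (hτ : ∀ i, 0 ≤ τ i)
    (hc : ∀ i, τ i < c i) (hp : ∀ i, 1 - ε ≤ μ.real {ω | X i ω ≤ τ i})
    (hq : ∀ i, ε - Δ ≤ μ.real {ω | τ i < X i ω})
    (hH : ∀ i, ∫ ω in {ω | τ i < X i ω}, F (Pi.single i (X i ω)) ∂μ
      = μ.real {ω | τ i < X i ω} * F (Pi.single i (c i)))
    (hH_int : ∀ i, Integrable (fun ω => F (Pi.single i (X i ω))) μ)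
    (hXhat : ∀ i ω, Xhat i ω = if X i ω ≤ τ i then X i ω else c i) (ha0 : 0 ≤ a) (ha1 : a ≤ 1)
    (hXtil : ∀ i ω, Xtil i ω = if a * τ i < Xhat i ω then Xhat i ω else 0)
    (hY0 : ∀ i ω, 0 ≤ Y i ω) (hY : ∀ i ω, (1 - ε) * Xtil i ω ≤ Y i ω)
    (hu_int : Integrable (fun ω => F (mask S fun i => X i ω)) μ)
    (hv_int : Integrable (fun ω => F (mask S fun i => Y i ω)) μ) (hS : S.card ≤ k) :
    ∫ ω, F (mask S fun i => X i ω) ∂μ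
      ≤ 2 * (1 + a * k / (ε - Δ)) / ((1 - ε) ^ k * (1 - Δ / ε))
        * ∫ ω, F (mask S fun i => Y i ω) ∂μ := by
  have hF0 : 0 ≤ F 0 := apply_nonneg_of_subadditive hF_mono hF_sub le_rfl
  have hc0 : ∀ i, 0 ≤ c i := fun i => (hτ i).trans (hc i).le
  rcases S.eq_empty_or_nonempty with rfl | hS_ne
  · have hmask : ∀ x : Fin n → ℝ, mask ∅ x = 0 := fun x => funext fun i => if_neg (by simp)
    simp only [hmask, integral_const, probReal_univ, one_smul]
    refine le_mul_of_le_add_add (T := 0) (Q := 0) hk hε0 hε1 hΔ0 hΔε ha0 hF0 ?_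
      (by simpa using hF0) (by simp)
    simpa using le_div_self hF0 (by linarith) (by linarith)
  exact le_mul_of_le_add_add hk hε0 hε1 hΔ0 hΔε ha0
    (integral_nonneg fun ω =>
      apply_nonneg_of_subadditive hF_mono hF_sub (mask_nonneg fun i _ => hY0 i ω))
    (integral_apply_mask_le_div_add_tailMass hX_meas hF_mono hF_sub hF_conc hε0.le hε1 hτ hc0 hH
      hH_int hXhat ha0 hXtil hY hu_int hv_int)
    (pow_mul_tailMass_le_integral_apply_mask_of_truncation hX_meas hX_nonneg hX_indep hF_mono
      hF_sub hF_conc hk hε0.le hε1.le hτ hc hp hXhat ha1 hXtil hY0 hY hv_int hS)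
    (mul_apply_mask_le_sum hF_mono hF_sub hS_ne (by linarith) (fun i _ => hq i) hτ
      fun i => (hc i).le)

end Sketch

theorem sketch_extendable_concave_approx_general
    {Ωs : Type*} [MeasurableSpace Ωs] (μ : Measure Ωs) [IsProbabilityMeasure μ]
    {n : ℕ}
    (X : Fin n → Ωs → ℝ)
    (hX_meas : ∀ i, Measurable (X i))
    (hX_nonneg : ∀ i ω, 0 ≤ X i ω)
    (hX_indep : iIndepFun X μ)
    (f : (Fin n → ℝ) → ℝ)
    (hf_ext : ∃ fstar : (Fin n → ℝ) → ℝ, Monotone fstar ∧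
      (∀ x y : Fin n → ℝ, fstar (x + y) ≤ fstar x + fstar y) ∧
      ConcaveOn ℝ Set.univ fstar ∧
      ∀ x : Fin n → ℝ, 0 ≤ x → fstar x = f x)
    (k : ℕ) (hk : 1 ≤ k)
    (ε Δ : ℝ) (hε : ε ∈ Set.Ioo (0 : ℝ) 1) (hΔ : Δ ∈ Set.Ico (0 : ℝ) ε)
    (τ : Fin n → ℝ) (hτ : ∀ i, 0 ≤ τ i)
    (hquant : ∀ i, 1 - ε ≤ (μ {ω | X i ω ≤ τ i}).toReal ∧
      (μ {ω | X i ω ≤ τ i}).toReal ≤ 1 - ε + Δ)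
    (H : Fin n → ℝ)
    (hH : ∀ i, H i = (∫ ω in {ω | τ i < X i ω}, f (Pi.single i (X i ω)) ∂μ) /
      (μ {ω | τ i < X i ω}).toReal)
    (hH_int : ∀ i, Integrable (fun ω => f (Pi.single i (X i ω))) μ)
    (cst : Fin n → ℝ) (hcst : ∀ i, τ i < cst i)
    (hcstH : ∀ i, f (Pi.single i (cst i)) = H i)
    (Xhat : Fin n → Ωs → ℝ)
    (hXhat : ∀ i ω, Xhat i ω = if X i ω ≤ τ i then X i ω else cst i)
    (a : ℝ) (ha : a ∈ Set.Icc (0 : ℝ) 1)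
    (Xtil : Fin n → Ωs → ℝ)
    (hXtil : ∀ i ω, Xtil i ω = if a * τ i < Xhat i ω then Xhat i ω else 0)
    (Y : Fin n → Ωs → ℝ)
    (hY : ∀ i ω, (1 - ε) * Xtil i ω ≤ Y i ω ∧ Y i ω ≤ Xtil i ω)
    (u v : Finset (Fin n) → ℝ)
    (hu : ∀ S, u S = ∫ ω, f (mask S (fun i => X i ω)) ∂μ)
    (hv : ∀ S, v S = ∫ ω, f (mask S (fun i => Y i ω)) ∂μ)
    (hu_int : ∀ S : Finset (Fin n),
      Integrable (fun ω => f (mask S (fun i => X i ω))) μ)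
    (hv_int : ∀ S : Finset (Fin n),
      Integrable (fun ω => f (mask S (fun i => Y i ω))) μ) :
    ∀ S : Finset (Fin n), S.card ≤ k →
      (1 / 2) * (1 - ε) ^ (k - 1) * (1 - Δ / ε) * v S ≤ u S ∧
      u S ≤ 2 * (1 + a * k / (ε - Δ)) / ((1 - ε) ^ k * (1 - Δ / ε)) * v S := by
  obtain ⟨F, hF_mono, hF_sub, hF_conc, hfF⟩ := hf_ext
  have hc0 : ∀ i, 0 ≤ cst i := fun i => (hτ i).trans (hcst i).le
  have hY0 : ∀ i ω, 0 ≤ Y i ω := fun i ω => (mul_nonneg (by linarith [hε.2])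
    (nonneg_of_truncation (hX_nonneg i ω) (hc0 i) (hXhat i ω) (hXtil i ω)).2).trans (hY i ω).1
  have hq : ∀ i, ε - Δ ≤ μ.real {ω | τ i < X i ω} := fun i =>
    sub_le_measureReal_lt (hX_meas i) (hquant i).2
  have hfF_comp : ∀ g : Ωs → Fin n → ℝ, (∀ ω, 0 ≤ g ω) → (fun ω => f (g ω)) = fun ω => F (g ω) :=
    fun g hg => funext fun ω => (hfF _ (hg ω)).symm
  have hXi : ∀ i, (fun ω => f (Pi.single i (X i ω))) = fun ω => F (Pi.single i (X i ω)) :=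
    fun i => hfF_comp _ fun ω => Pi.single_nonneg.2 (hX_nonneg i ω)
  have hH' : ∀ i, ∫ ω in {ω | τ i < X i ω}, F (Pi.single i (X i ω)) ∂μ
      = μ.real {ω | τ i < X i ω} * F (Pi.single i (cst i)) := fun i => by
    rw [hfF _ (Pi.single_nonneg.2 (hc0 i)), hcstH, hH, ← measureReal_def, ← hXi,
      mul_div_cancel₀ _ (by linarith [hq i, hΔ.2] : μ.real {ω | τ i < X i ω} ≠ 0)]
  have hH_int' : ∀ i, Integrable (fun ω => F (Pi.single i (X i ω))) μ :=
    fun i => hXi i ▸ hH_int i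
  intro S hS
  have hXS := hfF_comp _ fun ω => mask_nonneg (S := S) fun i _ => hX_nonneg i ω
  have hYS := hfF_comp _ fun ω => mask_nonneg (S := S) fun i _ => hY0 i ω
  have hu_int' := hXS ▸ hu_int S
  have hv_int' := hYS ▸ hv_int S
  rw [hu, hv, hXS, hYS]
  refine ⟨half_mul_integral_apply_mask_le hX_meas hX_nonneg hX_indep hF_mono hF_sub hF_conc hε.1
    hε.2 hΔ.1 hτ hc0 (fun i => (hquant i).1) hH' hH_int' hXhat hXtil hY0
    (fun i ω => (hY i ω).2) hu_int' hv_int' hS, ?_⟩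
  exact integral_apply_mask_le_mul hX_meas hX_nonneg hX_indep hF_mono hF_sub hF_conc hk hε.1
    hε.2 hΔ.1 hΔ.2 hτ hcst (fun i => (hquant i).1) hq hH' hH_int' hXhat ha.1 ha.2
    hXtil hY0 (fun i ω => (hY i ω).1) hu_int' hv_int' hS

/-- Theorem 2: for a monotone subadditive concave `f` on the nonnegative orthant
admitting a monotone, subadditive, concave extension to all of `ℝⁿ`, the sketch
`v(S) = E[f(Y_S)]` satisfies
`(1/2)(1−ε)^{k−1}(1−Δ/ε) v(S) ≤ u(S) ≤ 2(1 + a·k/(ε−Δ))/((1−ε)^k (1−Δ/ε)) v(S)`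
for all sets `S` with `|S| ≤ k`. -/
theorem sketch_extendable_concave_approx
    {Ωs : Type*} [MeasurableSpace Ωs] (μ : Measure Ωs) [IsProbabilityMeasure μ]
    {n : ℕ} (hn : 1 ≤ n)
    (X : Fin n → Ωs → ℝ)
    (hX_meas : ∀ i, Measurable (X i))
    (hX_nonneg : ∀ i ω, 0 ≤ X i ω)
    (hX_indep : iIndepFun X μ)
    (f : (Fin n → ℝ) → ℝ)
    (hf_meas : Measurable f)
    (hf_nonneg : ∀ x : Fin n → ℝ, 0 ≤ x → 0 ≤ f x)
    (hf_mono : ∀ x y : Fin n → ℝ, 0 ≤ x → x ≤ y → f x ≤ f y)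
    (hf_subadd : ∀ x y : Fin n → ℝ, 0 ≤ x → 0 ≤ y → f (x + y) ≤ f x + f y)
    (hf_conc : ConcaveOn ℝ {x : Fin n → ℝ | 0 ≤ x} f)
    (hf_ext : ∃ fstar : (Fin n → ℝ) → ℝ, Monotone fstar ∧
      (∀ x y : Fin n → ℝ, fstar (x + y) ≤ fstar x + fstar y) ∧
      ConcaveOn ℝ Set.univ fstar ∧
      ∀ x : Fin n → ℝ, 0 ≤ x → fstar x = f x)
    (k : ℕ) (hk : 1 ≤ k)
    (ε Δ : ℝ) (hε : ε ∈ Set.Ioo (0 : ℝ) 1) (hΔ : Δ ∈ Set.Ico (0 : ℝ) ε)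
    (τ : Fin n → ℝ) (hτ : ∀ i, 0 ≤ τ i)
    (hquant : ∀ i, 1 - ε ≤ (μ {ω | X i ω ≤ τ i}).toReal ∧
      (μ {ω | X i ω ≤ τ i}).toReal ≤ 1 - ε + Δ)
    (H : Fin n → ℝ)
    (hH : ∀ i, H i = (∫ ω in {ω | τ i < X i ω}, f (Pi.single i (X i ω)) ∂μ) /
      (μ {ω | τ i < X i ω}).toReal)
    (hH_int : ∀ i, Integrable (fun ω => f (Pi.single i (X i ω))) μ)
    (cst : Fin n → ℝ) (hcst : ∀ i, τ i < cst i)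
    (hcstH : ∀ i, f (Pi.single i (cst i)) = H i)
    (Xhat : Fin n → Ωs → ℝ)
    (hXhat : ∀ i ω, Xhat i ω = if X i ω ≤ τ i then X i ω else cst i)
    (a : ℝ) (ha : a ∈ Set.Icc (0 : ℝ) 1)
    (Xtil : Fin n → Ωs → ℝ)
    (hXtil : ∀ i ω, Xtil i ω = if a * τ i < Xhat i ω then Xhat i ω else 0)
    (Y : Fin n → Ωs → ℝ)
    (hY : ∀ i ω, (1 - ε) * Xtil i ω ≤ Y i ω ∧ Y i ω ≤ Xtil i ω)
    (u v : Finset (Fin n) → ℝ)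
    (hu : ∀ S, u S = ∫ ω, f (mask S (fun i => X i ω)) ∂μ)
    (hv : ∀ S, v S = ∫ ω, f (mask S (fun i => Y i ω)) ∂μ)
    (hu_int : ∀ S : Finset (Fin n),
      Integrable (fun ω => f (mask S (fun i => X i ω))) μ)
    (hv_int : ∀ S : Finset (Fin n),
      Integrable (fun ω => f (mask S (fun i => Y i ω))) μ) :
    ∀ S : Finset (Fin n), S.card ≤ k →
      (1 / 2) * (1 - ε) ^ (k - 1) * (1 - Δ / ε) * v S ≤ u S ∧
      u S ≤ 2 * (1 + a * k / (ε - Δ)) / ((1 - ε) ^ k * (1 - Δ / ε)) * v S :=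
  sketch_extendable_concave_approx_general μ X hX_meas hX_nonneg hX_indep f hf_ext k hk ε Δ hε hΔ τ
    hτ hquant H hH hH_int cst hcst hcstH Xhat hXhat a ha Xtil hXtil Y hY u v hu hv hu_int hv_int
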